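/- arXiv:2406.16618 — 2 statements merged into one kernel-verified Lean document; each statement's English description precedes it below -/
import Mathlib

section
/- (Parity Lemma) Let H be a graph in which every vertex has degree 3 or degree 1, no edge of H joins two vertices of degree 1, and exactly k vertices have degree 1. For every proper 3-edge-colouring of H with colours in K = (Z/2 × Z/2) ∖ {(0,0)}, if k₁, k₂, k₃ denote the numbers of pendant edges (edges incident with a degree-1 vertex) receiving the three respective colours, then k₁ ≡ k₂ ≡ k₃ ≡ k (mod 2). -/
/-- The colour set `K = (ℤ₂ × ℤ₂) ∖ {(0,0)}`. -/
abbrev Kol : Type := {x : ZMod 2 × ZMod 2 // x ≠ 0}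

/-- A proper edge colouring: distinct edges sharing a vertex get distinct colours. -/
def IsProperEdgeColoring {V C : Type*} (G : SimpleGraph V) (f : Sym2 V → C) : Prop :=
  ∀ e₁ ∈ G.edgeSet, ∀ e₂ ∈ G.edgeSet, e₁ ≠ e₂ → (∃ v : V, v ∈ e₁ ∧ v ∈ e₂) → f e₁ ≠ f e₂

/-- A graph is 3-edge-colourable if it has a proper edge colouring with three colours. -/
def ThreeEdgeColorable {V : Type*} (G : SimpleGraph V) : Prop :=
  ∃ f : Sym2 V → Kol, IsProperEdgeColoring G f

/-- A graph is cubic if every vertex has degree 3. -/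
def IsCubic {V : Type*} (G : SimpleGraph V) : Prop :=
  ∀ v : V, (G.neighborSet v).ncard = 3

/-- A snark: a connected cubic simple graph which is not 3-edge-colourable. -/
def IsSnark {V : Type*} (G : SimpleGraph V) : Prop :=
  G.Connected ∧ IsCubic G ∧ ¬ ThreeEdgeColorable G

/-- A snark is critical if removing any two distinct adjacent vertices yields a
3-edge-colourable graph. -/
def Critical {V : Type*} (G : SimpleGraph V) : Prop :=
  ∀ u v : V, G.Adj u v → ThreeEdgeColorable (G.induce ({u, v}ᶜ : Set V))

/-- A snark is bicritical if removing any two distinct vertices yields a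
3-edge-colourable graph. -/
def Bicritical {V : Type*} (G : SimpleGraph V) : Prop :=
  ∀ u v : V, u ≠ v → ThreeEdgeColorable (G.induce ({u, v}ᶜ : Set V))

/-- Strictly critical: critical but not bicritical. -/
def StrictlyCritical {V : Type*} (G : SimpleGraph V) : Prop :=
  Critical G ∧ ¬ Bicritical G

/-- A cubic graph is cyclically `k`-connected if no set of fewer than `k` edges
separates two cycles, i.e. there is no set `F` of fewer than `k` edges whose deletion
leaves a graph in which two connected components contain a cycle. -/
def CyclicallyConnected {V : Type*} (G : SimpleGraph V) (k : ℕ) : Prop :=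
  ¬ ∃ F : Set (Sym2 V), F ⊆ G.edgeSet ∧ F.ncard < k ∧
    ∃ a b : V, (∃ w : (G.deleteEdges F).Walk a a, w.IsCycle) ∧
               (∃ w : (G.deleteEdges F).Walk b b, w.IsCycle) ∧
               ¬ (G.deleteEdges F).Reachable a b

/-- The cyclic connectivity of a cubic graph: the largest `k` (at most the number of
edges) such that the graph is cyclically `k`-connected. -/
noncomputable def cyclicConnectivity {V : Type*} (G : SimpleGraph V) : ℕ :=
  sSup {k | k ≤ G.edgeSet.ncard ∧ CyclicallyConnected G k}

private lemma kol_pair_val : ∀ (c x : Kol),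
    (c.1.1 * x.1.2 + c.1.2 * x.1.1 : ZMod 2) = if x = c then 0 else 1 := by decide

private lemma kol_card : Fintype.card Kol = 3 := by decide

private lemma kol_sum_fst : ∑ x : Kol, x.1 = 0 := by decide

/-- **Parity Lemma.** Let `H` be a graph in which every vertex has degree
3 or 1, no edge joins two degree-1 vertices, and exactly `k` vertices have degree 1.
For every proper 3-edge-colouring of `H` with colours in `K`, the number of pendant
edges of each colour is congruent to `k` modulo 2. -/
theorem parity_lemma {V : Type*} [Fintype V] (H : SimpleGraph V)
    (hdeg : ∀ v : V, (H.neighborSet v).ncard = 3 ∨ (H.neighborSet v).ncard = 1)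
    (hpend : ∀ u v : V, H.Adj u v →
      ¬ ((H.neighborSet u).ncard = 1 ∧ (H.neighborSet v).ncard = 1))
    (k : ℕ) (hk : {v : V | (H.neighborSet v).ncard = 1}.ncard = k)
    (f : Sym2 V → Kol) (hf : IsProperEdgeColoring H f) (c : Kol) :
    {e : Sym2 V | e ∈ H.edgeSet ∧ (∃ v ∈ e, (H.neighborSet v).ncard = 1) ∧ f e = c}.ncard
      ≡ k [MOD 2] := by
  classical
  have h2 : ∀ x : ZMod 2 × ZMod 2, x + x = 0 := by decide
  have hdegcard : ∀ v : V, (H.neighborSet v).ncard = (H.neighborFinset v).card := by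
    intro v
    rw [SimpleGraph.neighborFinset, Set.ncard_eq_toFinset_card']
  -- the vertex-local colour sum
  set S : V → ZMod 2 × ZMod 2 := fun v => ∑ u ∈ H.neighborFinset v, (f s(v, u)).1 with hS
  -- total sum is zero, since every edge is counted twice
  have hsum0 : ∑ v, S v = 0 := by
    have h1 : ∑ v, S v
        = ∑ p ∈ (Finset.univ ×ˢ Finset.univ : Finset (V × V)),
            (if H.Adj p.1 p.2 then (f s(p.1, p.2)).1 else 0) := by
      rw [Finset.sum_product]
      refine Finset.sum_congr rfl fun v _ => ?_
      have hNv : H.neighborFinset v = Finset.univ.filter (fun u => H.Adj v u) := by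
        ext u; simp
      show ∑ u ∈ H.neighborFinset v, (f s(v, u)).1
          = ∑ y : V, if H.Adj (v, y).1 (v, y).2 then (f s((v, y).1, (v, y).2)).1 else 0
      rw [hNv, Finset.sum_filter]
    rw [h1]
    refine Finset.sum_ninvolution (fun p => (p.2, p.1)) ?_ ?_ ?_ ?_
    · intro a
      by_cases h : H.Adj a.1 a.2
      · simp only [h, if_pos, h.symm, Sym2.eq_swap]
        exact h2 _
      · have h' : ¬ H.Adj a.2 a.1 := fun hh => h hh.symm
        simp [h, h']
    · intro a ha
      by_cases h : H.Adj a.1 a.2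
      · intro hc
        have : a.2 = a.1 := congrArg Prod.fst hc
        exact H.irrefl (this ▸ h)
      · simp [h] at ha
    · intro a; simp
    · intro a; rfl
  -- a degree-3 vertex contributes zero
  have hS3 : ∀ v : V, (H.neighborFinset v).card = 3 → S v = 0 := by
    intro v hv
    have hinj : Set.InjOn (fun u => f s(v, u)) (H.neighborFinset v) := by
      intro a ha b hb hab
      by_contra hne
      have ha' : H.Adj v a := (H.mem_neighborFinset v a).mp ha
      have hb' : H.Adj v b := (H.mem_neighborFinset v b).mp hb
      refine hf s(v, a) ha' s(v, b) hb' ?_ ⟨v, Sym2.mem_mk_left v a, Sym2.mem_mk_left v b⟩ hab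
      intro h
      exact hne ((Sym2.congr_right).mp h)
    have himg : (H.neighborFinset v).image (fun u => f s(v, u)) = Finset.univ := by
      apply Finset.eq_univ_of_card
      rw [Finset.card_image_of_injOn hinj, hv, kol_card]
    have : S v = ∑ x ∈ (H.neighborFinset v).image (fun u => f s(v, u)), x.1 :=
      (Finset.sum_image (fun a ha b hb h => hinj ha hb h)).symm
    rw [this, himg]
    exact kol_sum_fst
  -- the pendant-neighbour function
  set w : V → V := fun v =>
    if h : (H.neighborFinset v).card = 1 then (Finset.card_eq_one.mp h).choose else v with hwdef
  have hwN : ∀ v : V, (H.neighborFinset v).card = 1 → H.neighborFinset v = {w v} := by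
    intro v h
    rw [hwdef]
    simp only [h, dif_pos]
    exact (Finset.card_eq_one.mp h).choose_spec
  have hwadj : ∀ v : V, (H.neighborFinset v).card = 1 → H.Adj v (w v) := by
    intro v h
    have : w v ∈ H.neighborFinset v := by rw [hwN v h]; exact Finset.mem_singleton_self _
    exact (H.mem_neighborFinset v (w v)).mp this
  have hw3 : ∀ v : V, (H.neighborFinset v).card = 1 → (H.neighborFinset (w v)).card ≠ 1 := by
    intro v h hc
    exact hpend v (w v) (hwadj v h) ⟨by rw [hdegcard]; exact h, by rw [hdegcard]; exact hc⟩
  -- the degree-one vertex set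
  set D : Finset V := Finset.univ.filter (fun v => (H.neighborFinset v).card = 1) with hD
  have hDk : D.card = k := by
    have hDeq : D = {v : V | (H.neighborSet v).ncard = 1}.toFinset := by
      ext v
      rw [Set.mem_toFinset]
      simp only [hD, Finset.mem_filter, Finset.mem_univ, true_and, Set.mem_setOf_eq,
        hdegcard v]
    rw [hDeq, ← Set.ncard_eq_toFinset_card', hk]
  have key : ∑ v ∈ D, (f s(v, w v)).1 = 0 := by
    have : ∑ v ∈ D, S v = 0 := by
      rw [← hsum0]
      apply Finset.sum_subset (Finset.subset_univ D)
      intro v _ hv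
      have : (H.neighborFinset v).card ≠ 1 := by
        intro h; exact hv (Finset.mem_filter.mpr ⟨Finset.mem_univ v, h⟩)
      rcases hdeg v with h3 | h1
      · exact hS3 v (by rw [← hdegcard]; exact h3)
      · exact absurd (by rw [← hdegcard]; exact h1) this
    calc ∑ v ∈ D, (f s(v, w v)).1 = ∑ v ∈ D, S v := by
          refine Finset.sum_congr rfl fun v hv => ?_
          have h1 : (H.neighborFinset v).card = 1 := (Finset.mem_filter.mp hv).2
          show (f s(v, w v)).1 = ∑ u ∈ H.neighborFinset v, (f s(v, u)).1
          rw [hwN v h1, Finset.sum_singleton]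
      _ = 0 := this
  -- the pendant edge set
  set P : Finset (Sym2 V) := Finset.univ.filter
    (fun e => e ∈ H.edgeSet ∧ (∃ x ∈ e, (H.neighborSet x).ncard = 1)) with hP
  -- bijection between D and P via v ↦ s(v, w v)
  have hmem : ∀ v ∈ D, s(v, w v) ∈ P := by
    intro v hv
    have h1 : (H.neighborFinset v).card = 1 := (Finset.mem_filter.mp hv).2
    refine Finset.mem_filter.mpr ⟨Finset.mem_univ _, (hwadj v h1), ⟨v, Sym2.mem_mk_left _ _, ?_⟩⟩
    rw [hdegcard]; exact h1
  have hinj : ∀ a ∈ D, ∀ b ∈ D, s(a, w a) = s(b, w b) → a = b := by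
    intro a ha b hb hab
    have ha1 : (H.neighborFinset a).card = 1 := (Finset.mem_filter.mp ha).2
    have hb1 : (H.neighborFinset b).card = 1 := (Finset.mem_filter.mp hb).2
    rcases Sym2.eq_iff.mp hab with ⟨h, _⟩ | ⟨h1', h2'⟩
    · exact h
    · exact absurd (h1' ▸ ha1) (hw3 b hb1)
  have hsurj : ∀ e ∈ P, ∃ v, ∃ (_ : v ∈ D), s(v, w v) = e := by
    intro e he
    obtain ⟨-, hedge, x, hx, hx1⟩ := Finset.mem_filter.mp he
    induction e with
    | _ a b =>
      have hadj : H.Adj a b := hedge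
      have hx1' : ∀ y, y ∈ s(a,b) → (H.neighborFinset y).card = 1 → s(y, w y) = s(a,b) ∧ y ∈ D := by
        intro y hy h1
        have : ∀ z, H.Adj y z → z = w y := by
          intro z hz
          have : z ∈ H.neighborFinset y := (H.mem_neighborFinset y z).mpr hz
          rw [hwN y h1] at this
          exact Finset.mem_singleton.mp this
        rcases Sym2.mem_iff.mp hy with rfl | rfl
        · rw [this b hadj]
          exact ⟨rfl, Finset.mem_filter.mpr ⟨Finset.mem_univ _, h1⟩⟩
        · rw [this a hadj.symm]
          exact ⟨Sym2.eq_swap, Finset.mem_filter.mpr ⟨Finset.mem_univ _, h1⟩⟩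
      have h1 : (H.neighborFinset x).card = 1 := by rw [← hdegcard]; exact hx1
      obtain ⟨he', hd⟩ := hx1' x hx h1
      exact ⟨x, hd, he'⟩
  have hPk : P.card = k :=
    (Finset.card_bij (fun v _ => s(v, w v)) hmem hinj hsurj).symm.trans hDk
  have hPsum : ∑ e ∈ P, (f e).1 = 0 :=
    (Finset.sum_bij (fun v _ => s(v, w v)) hmem hinj hsurj
      (g := fun e => (f e).1) (fun v _ => rfl)).symm.trans key
  -- apply the linear functional associated with c
  have hφ : ∑ e ∈ P, (c.1.1 * (f e).1.2 + c.1.2 * (f e).1.1) = (0 : ZMod 2) := by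
    rw [Finset.sum_add_distrib, ← Finset.mul_sum, ← Finset.mul_sum]
    have h1 : ∑ e ∈ P, (f e).1.2 = (∑ e ∈ P, (f e).1).2 := by
      rw [Prod.snd_sum]
    have h2 : ∑ e ∈ P, (f e).1.1 = (∑ e ∈ P, (f e).1).1 := by
      rw [Prod.fst_sum]
    rw [h1, h2, hPsum]
    simp
  have hφ' : ∑ e ∈ P, (if f e = c then (0 : ZMod 2) else 1) = 0 :=
    (Finset.sum_congr rfl fun e _ => (kol_pair_val c (f e)).symm).trans hφ
  have hne0 : ((P.filter (fun e => ¬ f e = c)).card : ZMod 2) = 0 := by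
    rw [← hφ']
    rw [Finset.sum_ite, Finset.sum_const, Finset.sum_const, smul_zero, zero_add,
      nsmul_eq_mul, mul_one]
  have hdvd : 2 ∣ (P.filter (fun e => ¬ f e = c)).card :=
    (ZMod.natCast_eq_zero_iff _ 2).mp hne0
  have hsplit : (P.filter (fun e => f e = c)).card + (P.filter (fun e => ¬ f e = c)).card
      = P.card := Finset.card_filter_add_card_filter_not _
  -- identify the set in the statement with the filtered finset
  have hset : {e : Sym2 V | e ∈ H.edgeSet ∧ (∃ v ∈ e, (H.neighborSet v).ncard = 1) ∧ f e = c}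
      = ↑(P.filter (fun e => f e = c)) := by
    ext e
    simp only [Set.mem_setOf_eq, Finset.coe_filter, Finset.mem_filter, hP, Finset.mem_univ,
      true_and, Set.mem_setOf_eq]
    tauto
  rw [hset, Set.ncard_coe_finset]
  obtain ⟨m, hm⟩ := hdvd
  have : (P.filter (fun e => f e = c)).card + 2 * m = k := by rw [← hm, hsplit, hPk]
  unfold Nat.ModEq
  omega
end

section
/- For every odd integer k ≥ 5, the flower (Isaacs) snark J_k is a critical snark. -/
/-- The flower (Isaacs) snark `J_k`: vertices `a_i = (0, i)`, `b_i = (1, i)`,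
`c_i = (2, i)`, `d_i = (3, i)` for `i ∈ ℤ/k`, with edges `a_i b_i`, `a_i c_i`,
`a_i d_i`, `b_i b_{i+1}`, `c_i d_{i+1}`, `d_i c_{i+1}`. -/
def flowerSnark (k : ℕ) : SimpleGraph (Fin 4 × ZMod k) :=
  SimpleGraph.fromRel (fun p q =>
    ∃ i : ZMod k,
      (p = (0, i) ∧ (q = (1, i) ∨ q = (2, i) ∨ q = (3, i))) ∨
      (p = (1, i) ∧ q = (1, i + 1)) ∨
      (p = (2, i) ∧ q = (3, i + 1)) ∨
      (p = (3, i) ∧ q = (2, i + 1)))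

/-!
Colours are the nonzero elements of the Klein group `𝔽₂²`, so three colours are pairwise
distinct exactly when they sum to zero, and any two distinct colours determine the third.
Passing one section of `J_k` transforms the colours `(x, y, z)` of `b_m b_{m+1}`, `c_m d_{m+1}`,
`d_m c_{m+1}` in a way that always flips `sectionParity x y z` (a finite check; the crossing of
the `c`–`d` strands is what makes it flip). Going once around the `k` sections, `k` odd, would
make this parity equal to its own negation.

For criticality, the rotations `m ↦ m - t` and the automorphism exchanging `c_m` and `d_m` map
every edge to one of `a₀b₀`, `a₀c₀`, `b₀b₁`, `c₀d₁`. For each of these an explicit colouring of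
`J_k` minus the two ends is given section by section and checked vertex by vertex.
-/

open Function SimpleGraph

namespace Kol

def A : Kol := ⟨(1, 0), by decide⟩
def B : Kol := ⟨(0, 1), by decide⟩
def C : Kol := ⟨(1, 1), by decide⟩

/-- Multiplication by a generator of `𝔽₄ˣ ≅ ℤ/3`: a cyclic permutation of the colours. -/
def rot (x : Kol) : Kol :=
  ⟨(x.1.2, x.1.1 + x.1.2), by obtain ⟨⟨a, b⟩, h⟩ := x; revert a b; decide⟩

/-- For `x ≠ y`, the colour distinct from both is `x + y`. -/
def third (x y : Kol) : Kol :=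
  if h : x.1 + y.1 = 0 then x else ⟨x.1 + y.1, h⟩

theorem eq_third_of_injective {x y z : Kol} (h : Injective ![x, y, z]) : y = third x z := by
  revert x y z; decide

end Kol

/-- If the colours are pairwise distinct, the orientation of `(x, y, z)`; otherwise, which of
the two colours other than `x + y + z` is repeated. -/
def sectionParity (x y z : Kol) : Bool :=
  if h : x.1 + y.1 + z.1 = 0 then y = x.rot else (if x = y then x else z) = Kol.rot ⟨_, h⟩

set_option synthInstance.maxSize 1000 in
theorem sectionParity_third (a b c p₁ p₂ p₃ : Kol) (habc : Injective ![a, b, c])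
    (h₁ : a ≠ p₁) (h₂ : b ≠ p₃) (h₃ : c ≠ p₂) :
    sectionParity (a.third p₁) (b.third p₃) (c.third p₂) = !sectionParity p₁ p₂ p₃ := by
  revert a b c p₁ p₂ p₃; decide

theorem IsProperEdgeColoring.ne_of_adj {V C : Type*} {G : SimpleGraph V} {f : Sym2 V → C}
    (hf : IsProperEdgeColoring G f) {p q r : V} (hq : G.Adj p q) (hr : G.Adj p r)
    (hqr : q ≠ r) : f s(p, q) ≠ f s(p, r) :=
  hf _ hq _ hr (fun h => hqr (Sym2.congr_right.1 h))
    ⟨p, Sym2.mem_mk_left _ _, Sym2.mem_mk_left _ _⟩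

theorem threeEdgeColorable_of_adj_ne {V : Type*} {G : SimpleGraph V} (c : V → V → Kol)
    (hsymm : ∀ ⦃p q⦄, G.Adj p q → c p q = c q p)
    (hne : ∀ ⦃p q r⦄, G.Adj p q → G.Adj p r → q ≠ r → c p q ≠ c p r) :
    ThreeEdgeColorable G := by
  have hout : ∀ ⦃p q⦄, G.Adj p q → c (Quot.out s(p, q)).1 (Quot.out s(p, q)).2 = c p q := by
    intro p q h
    have : s((Quot.out s(p, q)).1, (Quot.out s(p, q)).2) = s(p, q) := Quot.out_eq _
    rcases Sym2.eq_iff.1 this with ⟨h₁, h₂⟩ | ⟨h₁, h₂⟩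
    · rw [h₁, h₂]
    · rw [h₁, h₂, hsymm h.symm]
  refine ⟨fun e => c (Quot.out e).1 (Quot.out e).2, ?_⟩
  rintro e₁ he₁ e₂ he₂ hne₁₂ ⟨p, hp₁, hp₂⟩
  obtain ⟨q, rfl⟩ := Sym2.mem_iff_exists.1 hp₁
  obtain ⟨r, rfl⟩ := Sym2.mem_iff_exists.1 hp₂
  rw [mem_edgeSet] at he₁ he₂
  simp only [hout he₁, hout he₂]
  exact hne he₁ he₂ (by rintro rfl; exact hne₁₂ rfl)

/-- `col p i` colours the edge from `p` to `nbr p i`; `hcol` says that both of its ends agree. -/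
theorem threeEdgeColorable_induce_of_darts {V ι : Type*} {G : SimpleGraph V} (nbr : V → ι → V)
    (hnbr : ∀ ⦃p q⦄, G.Adj p q → ∃ i, nbr p i = q) (col : V → ι → Kol)
    (hcol : ∀ p i j, nbr (nbr p i) j = p → col (nbr p i) j = col p i) {S : Set V}
    (hS : ∀ p ∈ S, ∀ i j, nbr p i ∈ S → nbr p j ∈ S → nbr p i ≠ nbr p j → col p i ≠ col p j) :
    ThreeEdgeColorable (G.induce S) := by
  classical
  let c : V → V → Kol := fun p q => if h : ∃ i, nbr p i = q then col p h.choose else Kol.A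
  have hc : ∀ ⦃p q⦄, G.Adj p q → ∃ i, nbr p i = q ∧ c p q = col p i := fun p q h =>
    ⟨_, (hnbr h).choose_spec, dif_pos (hnbr h)⟩
  refine threeEdgeColorable_of_adj_ne (fun p q => c p q) (fun p q h => ?_)
    (fun p q r hq hr hqr => ?_)
  · obtain ⟨i, hi, hi'⟩ := hc (induce_adj.1 h)
    obtain ⟨j, hj, hj'⟩ := hc (induce_adj.1 h).symm
    have hij := hcol p i j (by rw [hi, hj])
    rw [hi] at hij
    rw [hi', hj', hij]
  · obtain ⟨i, hi, hi'⟩ := hc (induce_adj.1 hq)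
    obtain ⟨j, hj, hj'⟩ := hc (induce_adj.1 hr)
    rw [hi', hj']
    exact hS p p.2 i j (hi ▸ q.2) (hj ▸ r.2) (by rw [hi, hj]; exact Subtype.val_injective.ne hqr)

theorem ThreeEdgeColorable.of_injective_hom {V W : Type*} {G : SimpleGraph V}
    {H : SimpleGraph W} (φ : G →g H) (hφ : Injective φ) (h : ThreeEdgeColorable H) :
    ThreeEdgeColorable G := by
  obtain ⟨f, hf⟩ := h
  refine ⟨f ∘ Sym2.map φ, ?_⟩
  rintro e₁ he₁ e₂ he₂ hne ⟨v, hv₁, hv₂⟩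
  exact hf _ (φ.map_mem_edgeSet he₁) _ (φ.map_mem_edgeSet he₂) ((Sym2.map.injective hφ).ne hne)
    ⟨φ v, Sym2.mem_map.2 ⟨v, hv₁, rfl⟩, Sym2.mem_map.2 ⟨v, hv₂, rfl⟩⟩

theorem ThreeEdgeColorable.induce_compl_pair_of_injective_hom {V W : Type*}
    {G : SimpleGraph V} {H : SimpleGraph W} (φ : G →g H) (hφ : Injective φ) {u v : V}
    {u' v' : W} (hu : φ u = u') (hv : φ v = v') (h : ThreeEdgeColorable (H.induce {u', v'}ᶜ)) :
    ThreeEdgeColorable (G.induce {u, v}ᶜ) := by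
  subst hu hv
  have hmaps : Set.MapsTo φ {u, v}ᶜ {φ u, φ v}ᶜ := fun p hp => by simpa [hφ.eq_iff] using hp
  exact h.of_injective_hom (induceHom φ hmaps) (induceHom_injective φ hmaps hφ.injOn)

theorem add_one_ne_sub_one {R : Type*} [CommRing R] (h : (2 : R) ≠ 0) (a : R) :
    a + 1 ≠ a - 1 :=
  fun h' => h (by linear_combination h')

namespace ZMod

theorem natCast_ne_zero_of_lt {k n : ℕ} (hn : 0 < n) (h : n < k) : (n : ZMod k) ≠ 0 := by
  rw [Ne, natCast_eq_zero_iff]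
  exact fun hd => absurd (Nat.le_of_dvd hn hd) (by omega)

theorem val_add_one_eq_ite {k : ℕ} [NeZero k] (m : ZMod k) :
    (m + 1).val = if m.val + 1 = k then 0 else m.val + 1 := by
  have hm := m.val_lt
  conv_lhs => rw [← natCast_zmod_val m, ← Nat.cast_add_one, val_natCast]
  split_ifs with h
  · rw [h, Nat.mod_self]
  · exact Nat.mod_eq_of_lt (by omega)

theorem val_sub_one_eq_ite {k : ℕ} [NeZero k] (m : ZMod k) :
    (m - 1).val = if m.val = 0 then k - 1 else m.val - 1 := by
  have h := val_add_one_eq_ite (m - 1)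
  rw [sub_add_cancel] at h
  have := (m - 1).val_lt
  split_ifs at h ⊢ <;> omega

end ZMod

namespace FlowerSnark

variable {k : ℕ}

def nbr : Fin 4 × ZMod k → Fin 3 → Fin 4 × ZMod k
  | (0, m) => ![(1, m), (2, m), (3, m)]
  | (1, m) => ![(0, m), (1, m + 1), (1, m - 1)]
  | (2, m) => ![(0, m), (3, m + 1), (3, m - 1)]
  | (3, m) => ![(0, m), (2, m + 1), (2, m - 1)]

theorem exists_nbr_of_adj {p q : Fin 4 × ZMod k} (h : (flowerSnark k).Adj p q) :
    ∃ i, nbr p i = q := by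
  rw [flowerSnark, fromRel_adj] at h
  obtain ⟨-, ⟨i, ⟨rfl, rfl | rfl | rfl⟩ | ⟨rfl, rfl⟩ | ⟨rfl, rfl⟩ | ⟨rfl, rfl⟩⟩ |
    ⟨i, ⟨rfl, rfl | rfl | rfl⟩ | ⟨rfl, rfl⟩ | ⟨rfl, rfl⟩ | ⟨rfl, rfl⟩⟩⟩ := h <;>
    simp [nbr, Fin.exists_fin_succ]

theorem adj_nbr (hk : 3 ≤ k) (p : Fin 4 × ZMod k) (i : Fin 3) :
    (flowerSnark k).Adj p (nbr p i) := by
  have h₁ : (1 : ZMod k) ≠ 0 := by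
    exact_mod_cast ZMod.natCast_ne_zero_of_lt one_pos (by omega)
  obtain ⟨x, m⟩ := p
  rw [flowerSnark, fromRel_adj]
  fin_cases x <;> fin_cases i <;> simp [nbr, h₁, eq_sub_iff_add_eq]

theorem adj_iff_exists_nbr (hk : 3 ≤ k) {p q : Fin 4 × ZMod k} :
    (flowerSnark k).Adj p q ↔ ∃ i, nbr p i = q :=
  ⟨exists_nbr_of_adj, fun ⟨i, hi⟩ => hi ▸ adj_nbr hk p i⟩

theorem nbr_injective (hk : 3 ≤ k) (p : Fin 4 × ZMod k) : Injective (nbr p) := by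
  have h₂ : (2 : ZMod k) ≠ 0 := by
    exact_mod_cast ZMod.natCast_ne_zero_of_lt two_pos (by omega)
  obtain ⟨x, m⟩ := p
  fin_cases x <;> intro i j <;> fin_cases i <;> fin_cases j <;>
    simp [nbr, add_one_ne_sub_one h₂, (add_one_ne_sub_one h₂ m).symm]

theorem isCubic (hk : 3 ≤ k) : IsCubic (flowerSnark k) := by
  intro p
  have : (flowerSnark k).neighborSet p = Set.range (nbr p) := by
    ext q
    exact adj_iff_exists_nbr hk
  rw [this, Set.ncard_range_of_injective (nbr_injective hk p), Nat.card_eq_fintype_card,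
    Fintype.card_fin]

theorem reachable_b_natCast (hk : 3 ≤ k) (n : ℕ) :
    (flowerSnark k).Reachable (1, 0) (1, (n : ZMod k)) := by
  induction n with
  | zero => simp
  | succ n ih => simpa [nbr] using ih.trans (adj_nbr hk (1, (n : ZMod k)) 1).reachable

theorem connected (hk : 3 ≤ k) : (flowerSnark k).Connected := by
  have : NeZero k := ⟨by omega⟩
  refine (connected_iff_exists_forall_reachable _).2 ⟨(1, 0), ?_⟩
  rintro ⟨x, m⟩
  have hb : (flowerSnark k).Reachable (1, 0) (1, m) := by
    simpa using reachable_b_natCast hk m.val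
  have ha : (flowerSnark k).Reachable (1, 0) (0, m) := hb.trans (adj_nbr hk (1, m) 0).reachable
  fin_cases x
  exacts [ha, hb, ha.trans (adj_nbr hk (0, m) 1).reachable,
    ha.trans (adj_nbr hk (0, m) 2).reachable]

theorem injective_color_nbr (hk : 3 ≤ k) {f : Sym2 (Fin 4 × ZMod k) → Kol}
    (hf : IsProperEdgeColoring (flowerSnark k) f) (p : Fin 4 × ZMod k) :
    Injective fun i => f s(p, nbr p i) := fun i j h => by
  by_contra hij
  exact hf.ne_of_adj (adj_nbr hk p i) (adj_nbr hk p j) ((nbr_injective hk p).ne hij) h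

def parityAt (f : Sym2 (Fin 4 × ZMod k) → Kol) (m : ZMod k) : Bool :=
  sectionParity (f s((1, m), (1, m + 1))) (f s((2, m), (3, m + 1))) (f s((3, m), (2, m + 1)))

theorem parityAt_add_one (hk : 3 ≤ k) {f : Sym2 (Fin 4 × ZMod k) → Kol}
    (hf : IsProperEdgeColoring (flowerSnark k) f) (m : ZMod k) :
    parityAt f (m + 1) = !parityAt f m := by
  have hinj := injective_color_nbr hk hf
  have ha : Injective ![f s((0, m + 1), (1, m + 1)), f s((0, m + 1), (2, m + 1)),
      f s((0, m + 1), (3, m + 1))] := by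
    convert hinj (0, m + 1) using 1; funext i; fin_cases i <;> rfl
  have hb : Injective ![f s((0, m + 1), (1, m + 1)), f s((1, m + 1), (1, m + 1 + 1)),
      f s((1, m), (1, m + 1))] := by
    convert hinj (1, m + 1) using 1; funext i; fin_cases i <;> simp [nbr, Sym2.eq_swap]
  have hc : Injective ![f s((0, m + 1), (2, m + 1)), f s((2, m + 1), (3, m + 1 + 1)),
      f s((3, m), (2, m + 1))] := by
    convert hinj (2, m + 1) using 1; funext i; fin_cases i <;> simp [nbr, Sym2.eq_swap]
  have hd : Injective ![f s((0, m + 1), (3, m + 1)), f s((3, m + 1), (2, m + 1 + 1)),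
      f s((2, m), (3, m + 1))] := by
    convert hinj (3, m + 1) using 1; funext i; fin_cases i <;> simp [nbr, Sym2.eq_swap]
  rw [parityAt, parityAt, Kol.eq_third_of_injective hb, Kol.eq_third_of_injective hc,
    Kol.eq_third_of_injective hd]
  have h02 : (0 : Fin 3) ≠ 2 := by decide
  exact sectionParity_third _ _ _ _ _ _ ha (hb.ne h02) (hc.ne h02) (hd.ne h02)

theorem not_threeEdgeColorable (hk : 3 ≤ k) (hodd : Odd k) :
    ¬ ThreeEdgeColorable (flowerSnark k) := by
  rintro ⟨f, hf⟩
  have hiter : ∀ n : ℕ, parityAt f n = (!·)^[n] (parityAt f 0) := by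
    intro n
    induction n with
    | zero => simp
    | succ n ih => rw [Nat.cast_succ, parityAt_add_one hk hf, ih, iterate_succ_apply']
  have hk0 := hiter k
  rw [ZMod.natCast_self, Bool.involutive_not.iterate_odd hodd] at hk0
  simp at hk0

def rotate (t : ZMod k) : flowerSnark k →g flowerSnark k where
  toFun p := (p.1, p.2 - t)
  map_rel' {p q} h := by
    rw [flowerSnark, fromRel_adj] at h ⊢
    obtain ⟨hne, ⟨i, h⟩ | ⟨i, h⟩⟩ := h <;>
      rcases h with ⟨rfl, rfl | rfl | rfl⟩ | ⟨rfl, rfl⟩ | ⟨rfl, rfl⟩ | ⟨rfl, rfl⟩ <;>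
      simp_all [sub_add_eq_add_sub]

theorem rotate_injective (t : ZMod k) : Injective (rotate t) := fun p q h => by
  simpa [rotate, Prod.ext_iff] using h

def swapCD : flowerSnark k →g flowerSnark k where
  toFun p := (![0, 1, 3, 2] p.1, p.2)
  map_rel' {p q} h := by
    rw [flowerSnark, fromRel_adj] at h ⊢
    obtain ⟨hne, ⟨i, h⟩ | ⟨i, h⟩⟩ := h <;>
      rcases h with ⟨rfl, rfl | rfl | rfl⟩ | ⟨rfl, rfl⟩ | ⟨rfl, rfl⟩ | ⟨rfl, rfl⟩ <;>
      simp_all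

theorem swapCD_injective : Injective (swapCD (k := k)) := fun p q h => by
  have hσ : Injective (![0, 1, 3, 2] : Fin 4 → Fin 4) := by decide
  simp only [swapCD, RelHom.coeFn_mk, Prod.ext_iff] at h
  exact Prod.ext (hσ h.1) h.2

/-- A colouring of `J_k` given section by section, indexed by `t = m.val < k`: the colours of
`a_t b_t`, `a_t c_t`, `a_t d_t`, `b_t b_{t+1}`, `c_t d_{t+1}` and `d_t c_{t+1}`. -/
structure SectionColoring where
  ab : ℕ → Kol
  ac : ℕ → Kol
  ad : ℕ → Kol
  bb : ℕ → Kol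
  cd : ℕ → Kol
  dc : ℕ → Kol

namespace SectionColoring

def dart (c : SectionColoring) : Fin 4 × ZMod k → Fin 3 → Kol
  | (0, m) => ![c.ab m.val, c.ac m.val, c.ad m.val]
  | (1, m) => ![c.ab m.val, c.bb m.val, c.bb (m - 1).val]
  | (2, m) => ![c.ac m.val, c.cd m.val, c.dc (m - 1).val]
  | (3, m) => ![c.ad m.val, c.dc m.val, c.cd (m - 1).val]

theorem dart_nbr_nbr (hk : 3 ≤ k) (c : SectionColoring) (p : Fin 4 × ZMod k) (i j : Fin 3)
    (h : nbr (nbr p i) j = p) : c.dart (nbr p i) j = c.dart p i := by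
  have h₂ : (2 : ZMod k) ≠ 0 := by
    exact_mod_cast ZMod.natCast_ne_zero_of_lt two_pos (by omega)
  obtain ⟨x, m⟩ := p
  fin_cases x <;> fin_cases i <;> fin_cases j <;> simp [nbr, dart] at h ⊢
  all_goals exact absurd (by first | linear_combination h | linear_combination -h) h₂

theorem threeEdgeColorable_induce (hk : 3 ≤ k) (c : SectionColoring)
    {S : Set (Fin 4 × ZMod k)}
    (hS : ∀ p ∈ S, ∀ i j, nbr p i ∈ S → nbr p j ∈ S → nbr p i ≠ nbr p j →
      c.dart p i ≠ c.dart p j) :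
    ThreeEdgeColorable ((flowerSnark k).induce S) :=
  threeEdgeColorable_induce_of_darts nbr (fun _ _ => exists_nbr_of_adj) c.dart
    (c.dart_nbr_nbr hk) hS

end SectionColoring

section Colorings

open Kol

/- Away from the deleted vertices each colouring alternates with period 2 in `t`; the odd
length of the cycle of sections is absorbed next to the deleted vertices. -/

def coloringA0B0 : SectionColoring where
  ab _ := B
  ac t := if t % 2 = 0 then C else A
  ad t := if t % 2 = 0 then A else C
  bb t := if t % 2 = 0 then A else C
  cd _ := B
  dc t := if t % 2 = 0 then C else A

def coloringA0C0 : SectionColoring where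
  ab t := if t = 1 then C else A
  ac t := if t % 2 = 1 ∧ t ≠ 1 then C else B
  ad t := if t = 1 then A else if t % 2 = 0 then C else B
  bb t := if t = 0 then A else if t % 2 = 1 then B else C
  cd t := if t = 0 then B else A
  dc t := if t = 0 then C else if t % 2 = 1 then C else B

def coloringB0B1 (k : ℕ) : SectionColoring where
  ab t := if t ≤ 1 then B else if t = 2 then C else if t = k - 1 then B else A
  ac t := if t ≤ 1 then C else if t = 2 then B else if t = k - 1 then A else
    if t % 2 = 0 then C else B
  ad t := if t ≤ 1 then B else if t = 2 then A else if t = k - 1 then C else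
    if t % 2 = 0 then B else C
  bb t := if t ≤ 1 then A else if t = 2 then B else if t = k - 1 then A else
    if t % 2 = 1 then C else B
  cd t := if t = 0 then A else if t = 1 then B else if t = k - 1 then C else A
  dc t := if t = 0 then A else if t = 1 then C else if t = k - 1 then B else
    if t % 2 = 1 then B else C

def coloringC0D1 : SectionColoring where
  ab t := if t = 0 then B else if t = 1 then A else if t = 2 then C else B
  ac t := if t ≤ 1 then B else if t = 2 then A else if t % 2 = 0 then C else A
  ad t := if t ≤ 1 then A else if t = 2 then B else if t % 2 = 0 then A else C
  bb t := if t = 0 then C else if t = 1 then B else if t % 2 = 0 then A else C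
  cd t := if t = 0 then B else if t = 1 then A else B
  dc t := if t = 0 then C else if t = 1 then B else if t % 2 = 0 then C else A

end Colorings

theorem threeEdgeColorable_remove_a0_b0 (hk : 5 ≤ k) (hodd : Odd k) :
    ThreeEdgeColorable ((flowerSnark k).induce {(0, 0), (1, 0)}ᶜ) := by
  have : NeZero k := ⟨by omega⟩
  have := Nat.odd_iff.1 hodd
  refine coloringA0B0.threeEdgeColorable_induce (by omega) ?_
  rintro ⟨x, m⟩ hp i j hi hj hij
  have := m.val_lt
  fin_cases x <;> fin_cases i <;> fin_cases j <;>
    simp [nbr, SectionColoring.dart, coloringA0B0, ← ZMod.val_eq_zero,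
      ZMod.val_add_one_eq_ite, ZMod.val_sub_one_eq_ite] at hp hi hj hij ⊢ <;>
    split_ifs at * <;> first | decide | (exfalso; omega)

theorem threeEdgeColorable_remove_a0_c0 (hk : 5 ≤ k) (hodd : Odd k) :
    ThreeEdgeColorable ((flowerSnark k).induce {(0, 0), (2, 0)}ᶜ) := by
  have : NeZero k := ⟨by omega⟩
  have := Nat.odd_iff.1 hodd
  refine coloringA0C0.threeEdgeColorable_induce (by omega) ?_
  rintro ⟨x, m⟩ hp i j hi hj hij
  have := m.val_lt
  fin_cases x <;> fin_cases i <;> fin_cases j <;>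
    simp [nbr, SectionColoring.dart, coloringA0C0, ← ZMod.val_eq_zero,
      ZMod.val_add_one_eq_ite, ZMod.val_sub_one_eq_ite] at hp hi hj hij ⊢ <;>
    split_ifs at * <;> first | decide | (exfalso; omega)

set_option maxHeartbeats 2000000 in
theorem threeEdgeColorable_remove_b0_b1 (hk : 5 ≤ k) (hodd : Odd k) :
    ThreeEdgeColorable ((flowerSnark k).induce {(1, 0), (1, 1)}ᶜ) := by
  have : NeZero k := ⟨by omega⟩
  have := Nat.odd_iff.1 hodd
  refine (coloringB0B1 k).threeEdgeColorable_induce (by omega) ?_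
  rintro ⟨x, m⟩ hp i j hi hj hij
  have := m.val_lt
  fin_cases x <;> fin_cases i <;> fin_cases j <;>
    simp [nbr, SectionColoring.dart, coloringB0B1, ← ZMod.val_eq_zero,
      ← ZMod.val_eq_one (by omega : 1 < k), ZMod.val_add_one_eq_ite,
      ZMod.val_sub_one_eq_ite] at hp hi hj hij ⊢ <;>
    split_ifs at * <;> first | decide | (exfalso; omega)

theorem threeEdgeColorable_remove_c0_d1 (hk : 5 ≤ k) (hodd : Odd k) :
    ThreeEdgeColorable ((flowerSnark k).induce {(2, 0), (3, 1)}ᶜ) := by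
  have : NeZero k := ⟨by omega⟩
  have := Nat.odd_iff.1 hodd
  refine coloringC0D1.threeEdgeColorable_induce (by omega) ?_
  rintro ⟨x, m⟩ hp i j hi hj hij
  have := m.val_lt
  fin_cases x <;> fin_cases i <;> fin_cases j <;>
    simp [nbr, SectionColoring.dart, coloringC0D1, ← ZMod.val_eq_zero,
      ← ZMod.val_eq_one (by omega : 1 < k), ZMod.val_add_one_eq_ite,
      ZMod.val_sub_one_eq_ite] at hp hi hj hij ⊢ <;>
    split_ifs at * <;> first | decide | (exfalso; omega)

theorem critical (hk : 5 ≤ k) (hodd : Odd k) : Critical (flowerSnark k) := by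
  intro u v huv
  rw [flowerSnark, fromRel_adj] at huv
  obtain ⟨-, h | h⟩ := huv
  on_goal 2 => rw [Set.pair_comm]
  all_goals
    obtain ⟨i, ⟨rfl, rfl | rfl | rfl⟩ | ⟨rfl, rfl⟩ | ⟨rfl, rfl⟩ | ⟨rfl, rfl⟩⟩ := h
    · exact .induce_compl_pair_of_injective_hom (rotate i) (rotate_injective i)
        (by simp [rotate]) (by simp [rotate]) (threeEdgeColorable_remove_a0_b0 hk hodd)
    · exact .induce_compl_pair_of_injective_hom (rotate i) (rotate_injective i)
        (by simp [rotate]) (by simp [rotate]) (threeEdgeColorable_remove_a0_c0 hk hodd)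
    · exact .induce_compl_pair_of_injective_hom (swapCD.comp (rotate i))
        (swapCD_injective.comp (rotate_injective i)) (by simp [rotate, swapCD])
        (by simp [rotate, swapCD]) (threeEdgeColorable_remove_a0_c0 hk hodd)
    · exact .induce_compl_pair_of_injective_hom (rotate i) (rotate_injective i)
        (by simp [rotate]) (by simp [rotate]) (threeEdgeColorable_remove_b0_b1 hk hodd)
    · exact .induce_compl_pair_of_injective_hom (rotate i) (rotate_injective i)
        (by simp [rotate]) (by simp [rotate]) (threeEdgeColorable_remove_c0_d1 hk hodd)
    · exact .induce_compl_pair_of_injective_hom (swapCD.comp (rotate i))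
        (swapCD_injective.comp (rotate_injective i)) (by simp [rotate, swapCD])
        (by simp [rotate, swapCD]) (threeEdgeColorable_remove_c0_d1 hk hodd)

end FlowerSnark

/-- For every odd `k ≥ 5`, the flower (Isaacs) snark `J_k` is a
critical snark. -/
theorem flowerSnark_critical (k : ℕ) (hk : 5 ≤ k) (hodd : Odd k) :
    IsSnark (flowerSnark k) ∧ Critical (flowerSnark k) :=
  ⟨⟨FlowerSnark.connected (by omega), FlowerSnark.isCubic (by omega),
    FlowerSnark.not_threeEdgeColorable (by omega) hodd⟩, FlowerSnark.critical hk hodd⟩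
end
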